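/- For all λ, t ∈ [0,1]: (i) (1+λ)·(Λ + 2λ²t²) + 2√Λ·λ·λt² ≥ 2√Λ·λ·√(Λ + 4λ²t²) (so that g₋ is well defined as a real square root); and (ii) g₊·g₋ ≥ 2t²λ²·(1+λ−√Λ). Consequently, if moreover (λ,t) ≠ (1,0), the real symmetric 2×2 matrices M_± = m·!![g₊, ∓√2·tλ·√(1+λ−√Λ); ∓√2·tλ·√(1+λ−√Λ), g₋] are positive semidefinite. -/

import Mathlib

open Matrix

noncomputable section

/-- `Λ = (1-λ)(1+3λ)`. -/
def Lambda (lam : ℝ) : ℝ := (1 - lam) * (1 + 3 * lam)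

/-- `g₊ = √((1+λ)(Λ + 2λ²t²) + 2√Λ·λ·(λt² + √(Λ + 4λ²t²)))`. -/
def gP (lam t : ℝ) : ℝ :=
  Real.sqrt ((1 + lam) * (Lambda lam + 2 * lam ^ 2 * t ^ 2) +
    2 * Real.sqrt (Lambda lam) * lam *
      (lam * t ^ 2 + Real.sqrt (Lambda lam + 4 * lam ^ 2 * t ^ 2)))

/-- `g₋ = √((1+λ)(Λ + 2λ²t²) + 2√Λ·λ·(λt² − √(Λ + 4λ²t²)))`. -/
def gM (lam t : ℝ) : ℝ :=
  Real.sqrt ((1 + lam) * (Lambda lam + 2 * lam ^ 2 * t ^ 2) +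
    2 * Real.sqrt (Lambda lam) * lam *
      (lam * t ^ 2 - Real.sqrt (Lambda lam + 4 * lam ^ 2 * t ^ 2)))

/-- `m = (1/4)√((1−t²)(1−λ)/(Λ + 4λ²t²))`. -/
def mCoef (lam t : ℝ) : ℝ :=
  (1 / 4) * Real.sqrt ((1 - t ^ 2) * (1 - lam) / (Lambda lam + 4 * lam ^ 2 * t ^ 2))

/-- The real symmetric 2×2 matrix `M_ε` (`ε = ±1`). -/
def Mmat (lam t ε : ℝ) : Matrix (Fin 2) (Fin 2) ℝ :=
  mCoef lam t •
    !![gP lam t, -ε * Real.sqrt 2 * t * lam * Real.sqrt (1 + lam - Real.sqrt (Lambda lam));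
       -ε * Real.sqrt 2 * t * lam * Real.sqrt (1 + lam - Real.sqrt (Lambda lam)), gM lam t]

end

/-!
With `s = √Λ`, `r = √(Λ + 4λ²t²)`, `A = (1+λ)(Λ + 2λ²t²) + 2sλ·λt²` and `B = 2sλr`, the radicands
of `g₊` and `g₋` are `A + B` and `A - B`, so `g₊ g₋ = √(A² - B²)`. Using `s² = Λ` and `r² = Λ + 4λ²t²`,
`A² - B² - (2t²λ²(1+λ-s))²` is a polynomial in `λ, t, s` all of whose terms are visibly nonnegative
once `Λ ≥ 0`. This gives (i) and (ii) at once, and (ii) is exactly the determinant condition making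
the 2×2 blocks positive semidefinite.
-/

lemma quadratic_form_nonneg {a b c : ℝ} (ha : 0 ≤ a) (hc : 0 ≤ c) (hb : b ^ 2 ≤ a * c)
    (x y : ℝ) : 0 ≤ a * x ^ 2 + 2 * b * (x * y) + c * y ^ 2 := by
  rcases ha.eq_or_lt with rfl | ha
  · have hb0 : b = 0 := by nlinarith [sq_nonneg b]
    subst hb0
    nlinarith [mul_nonneg hc (sq_nonneg y)]
  · -- `a · Q(x, y) = (a x + b y)² + (a c - b²) y²`
    nlinarith [sq_nonneg (a * x + b * y), mul_nonneg (sub_nonneg.2 hb) (sq_nonneg y)]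

lemma Matrix.posSemidef_of_sq_le_mul {a b c : ℝ} (ha : 0 ≤ a) (hc : 0 ≤ c)
    (hb : b ^ 2 ≤ a * c) : (!![a, b; b, c]).PosSemidef := by
  refine PosSemidef.of_dotProduct_mulVec_nonneg ?_ fun x => ?_
  · ext i j
    fin_cases i <;> fin_cases j <;> rfl
  · have hq : star x ⬝ᵥ (!![a, b; b, c] *ᵥ x) =
        a * x 0 ^ 2 + 2 * b * (x 0 * x 1) + c * x 1 ^ 2 := by
      simp only [dotProduct, Pi.star_apply, star_trivial, mulVec, of_apply, cons_val',
        cons_val_fin_one, Fin.sum_univ_two, Fin.isValue, cons_val_zero, cons_val_one]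
      ring
    exact hq ▸ quadratic_form_nonneg ha hc hb (x 0) (x 1)

lemma le_sqrt_add_mul_sqrt_sub {a b c : ℝ} (hab : 0 ≤ a + b) (h : c ^ 2 ≤ a ^ 2 - b ^ 2) :
    c ≤ √(a + b) * √(a - b) := by
  rw [← Real.sqrt_mul hab]
  exact Real.le_sqrt_of_sq_le (by linarith [show (a + b) * (a - b) = a ^ 2 - b ^ 2 by ring])

section

variable {lam : ℝ}

lemma Lambda_nonneg (hlam : lam ∈ Set.Icc (0 : ℝ) 1) : 0 ≤ Lambda lam :=
  mul_nonneg (by linarith [hlam.2]) (by linarith [hlam.1])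

lemma one_add_nonneg_of_Lambda_nonneg (hΛ : 0 ≤ Lambda lam) : 0 ≤ 1 + lam := by
  unfold Lambda at hΛ
  nlinarith

lemma sqrt_Lambda_le (hΛ : 0 ≤ Lambda lam) : √(Lambda lam) ≤ 1 + lam := by
  rw [Real.sqrt_le_left (one_add_nonneg_of_Lambda_nonneg hΛ), Lambda]
  nlinarith [sq_nonneg lam]

variable (t : ℝ)

lemma sq_le_sq_sub_sq_of_Lambda_nonneg (hΛ : 0 ≤ Lambda lam) :
    (2 * t ^ 2 * lam ^ 2 * (1 + lam - √(Lambda lam))) ^ 2 ≤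
      ((1 + lam) * (Lambda lam + 2 * lam ^ 2 * t ^ 2) + 2 * √(Lambda lam) * lam * (lam * t ^ 2)) ^ 2
        - (2 * √(Lambda lam) * lam * √(Lambda lam + 4 * lam ^ 2 * t ^ 2)) ^ 2 := by
  have hs : √(Lambda lam) ^ 2 = Lambda lam := Real.sq_sqrt hΛ
  have hr : √(Lambda lam + 4 * lam ^ 2 * t ^ 2) ^ 2 = Lambda lam + 4 * lam ^ 2 * t ^ 2 :=
    Real.sq_sqrt (add_nonneg hΛ (by positivity))
  have h1 : 0 ≤ 1 + lam := one_add_nonneg_of_Lambda_nonneg hΛ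
  have hgap : 0 ≤ Lambda lam ^ 3 + 4 * Lambda lam ^ 2 * (lam ^ 2 * t ^ 2) + √(Lambda lam) *
      (4 * ((1 + lam) * (Lambda lam + 2 * (lam ^ 2 * t ^ 2))) * (lam ^ 2 * t ^ 2)
        + 8 * (lam ^ 2 * t ^ 2) ^ 2 * (1 + lam)) := by positivity
  unfold Lambda at *
  linear_combination (4 * lam ^ 2 * √((1 - lam) * (1 + 3 * lam) + 4 * lam ^ 2 * t ^ 2) ^ 2) * hs
    + (4 * lam ^ 2 * ((1 - lam) * (1 + 3 * lam))) * hr + hgap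

lemma abs_sqrt_Lambda_mul_le (hΛ : 0 ≤ Lambda lam) :
    |2 * √(Lambda lam) * lam * √(Lambda lam + 4 * lam ^ 2 * t ^ 2)| ≤
      (1 + lam) * (Lambda lam + 2 * lam ^ 2 * t ^ 2) +
        2 * √(Lambda lam) * lam * (lam * t ^ 2) := by
  have h1 := one_add_nonneg_of_Lambda_nonneg hΛ
  have hA : 0 ≤ (1 + lam) * (Lambda lam + 2 * lam ^ 2 * t ^ 2) +
      2 * √(Lambda lam) * lam * (lam * t ^ 2) := by
    rw [show 2 * √(Lambda lam) * lam * (lam * t ^ 2) = 2 * √(Lambda lam) * (lam ^ 2 * t ^ 2)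
      by ring]
    positivity
  refine abs_le_of_sq_le_sq ?_ hA
  nlinarith [sq_le_sq_sub_sq_of_Lambda_nonneg t hΛ]

lemma le_gP_mul_gM (hΛ : 0 ≤ Lambda lam) :
    2 * t ^ 2 * lam ^ 2 * (1 + lam - √(Lambda lam)) ≤ gP lam t * gM lam t := by
  have hB := abs_le.1 (abs_sqrt_Lambda_mul_le t hΛ)
  have h := le_sqrt_add_mul_sqrt_sub (by linarith [hB.1]) (sq_le_sq_sub_sq_of_Lambda_nonneg t hΛ)
  rw [gP, gM]
  convert h using 3 <;> ring

lemma Mmat_posSemidef (hΛ : 0 ≤ Lambda lam) {ε : ℝ} (hε : ε ^ 2 ≤ 1) :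
    (Mmat lam t ε).PosSemidef := by
  have hw : 0 ≤ 1 + lam - √(Lambda lam) := sub_nonneg.2 (sqrt_Lambda_le hΛ)
  have hC : 0 ≤ 2 * t ^ 2 * lam ^ 2 * (1 + lam - √(Lambda lam)) := by positivity
  have hb : (-ε * √2 * t * lam * √(1 + lam - √(Lambda lam))) ^ 2 =
      ε ^ 2 * (2 * t ^ 2 * lam ^ 2 * (1 + lam - √(Lambda lam))) := by
    rw [mul_pow, mul_pow, mul_pow, mul_pow, Real.sq_sqrt zero_le_two, Real.sq_sqrt hw]
    ring
  refine PosSemidef.smul (posSemidef_of_sq_le_mul (Real.sqrt_nonneg _) (Real.sqrt_nonneg _) ?_)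
    (by unfold mCoef; positivity)
  rw [hb]
  exact (mul_le_of_le_one_left hC hε).trans (le_gP_mul_gM t hΛ)

end

theorem complementary_blocks_posSemidef_general (lam t : ℝ)
    (hlam : lam ∈ Set.Icc (0 : ℝ) 1) :
    2 * Real.sqrt (Lambda lam) * lam * Real.sqrt (Lambda lam + 4 * lam ^ 2 * t ^ 2) ≤
      (1 + lam) * (Lambda lam + 2 * lam ^ 2 * t ^ 2) +
        2 * Real.sqrt (Lambda lam) * lam * (lam * t ^ 2) ∧
    2 * t ^ 2 * lam ^ 2 * (1 + lam - Real.sqrt (Lambda lam)) ≤ gP lam t * gM lam t ∧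
    ((lam, t) ≠ (1, 0) → (Mmat lam t 1).PosSemidef ∧ (Mmat lam t (-1)).PosSemidef) := by
  have hΛ := Lambda_nonneg hlam
  exact ⟨(le_abs_self _).trans (abs_sqrt_Lambda_mul_le t hΛ), le_gP_mul_gM t hΛ,
    fun _ => ⟨Mmat_posSemidef t hΛ (by norm_num), Mmat_posSemidef t hΛ (by norm_num)⟩⟩

/-- **Positivity of the complementary dual blocks.** For all `λ, t ∈ [0,1]`:
(i) `(1+λ)(Λ + 2λ²t²) + 2√Λ λ λt² ≥ 2√Λ λ √(Λ + 4λ²t²)`;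
(ii) `g₊ g₋ ≥ 2t²λ²(1+λ−√Λ)`; and consequently, if `(λ,t) ≠ (1,0)`, the matrices
`M_± = m·[[g₊, ∓√2 tλ √(1+λ−√Λ)], [∓√2 tλ √(1+λ−√Λ), g₋]]` are positive semidefinite. -/
theorem complementary_blocks_posSemidef (lam t : ℝ)
    (hlam : lam ∈ Set.Icc (0 : ℝ) 1) (ht : t ∈ Set.Icc (0 : ℝ) 1) :
    2 * Real.sqrt (Lambda lam) * lam * Real.sqrt (Lambda lam + 4 * lam ^ 2 * t ^ 2) ≤
      (1 + lam) * (Lambda lam + 2 * lam ^ 2 * t ^ 2) +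
        2 * Real.sqrt (Lambda lam) * lam * (lam * t ^ 2) ∧
    2 * t ^ 2 * lam ^ 2 * (1 + lam - Real.sqrt (Lambda lam)) ≤ gP lam t * gM lam t ∧
    ((lam, t) ≠ (1, 0) → (Mmat lam t 1).PosSemidef ∧ (Mmat lam t (-1)).PosSemidef) :=
  complementary_blocks_posSemidef_general lam t hlam
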